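/- Let M(a;b) and Q(a;b) be as defined (M(a;b) := a·b² + 3∑_{ν=1}^{2b−1}⌊aν/(2b)⌋(b−ν) + 3∑_{ν=1}^{b−1}(⌊2aν/b⌋−2⌊aν/b⌋)(b−2ν)). For coprime positive integers a, b with a+b odd, the reciprocity a·M(a;b) + b·M(b;a) = (1 − a² − b² + 6ab(a+b))/4 holds. -/
import Mathlib


open Finset Real

/-- The classical Dedekind sum `s(a;b)` defined by the cotangent sum. -/
noncomputable def dedekindS (a : ℤ) (b : ℕ) : ℝ :=
  (1 / (4 * (b : ℝ))) * ∑ ν ∈ Finset.Ico 1 b,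
    Real.cot (Real.pi * a * ν / b) * Real.cot (Real.pi * ν / b)

/-- The rational part `Q(a;b)` of the elliptic classical Dedekind sum. -/
noncomputable def Qpart (a b : ℕ) : ℝ :=
  6 * (dedekindS a (2 * b) + dedekindS (2 * a) b - 2 * dedekindS a b)

/-- The integral part `M(a;b)`. -/
def Mpart (a b : ℕ) : ℤ :=
  (a : ℤ) * (b : ℤ) ^ 2
    + 3 * ∑ ν ∈ Finset.Ico 1 (2 * b), ((a * ν / (2 * b) : ℕ) : ℤ) * ((b : ℤ) - (ν : ℤ))
    + 3 * ∑ ν ∈ Finset.Ico 1 b,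
        (((2 * a * ν / b : ℕ) : ℤ) - 2 * ((a * ν / b : ℕ) : ℤ)) * ((b : ℤ) - 2 * (ν : ℤ))

set_option linter.unusedTactic false

namespace MRec


def Asum (p q : ℕ) : ℤ := ∑ x ∈ Ico 1 q, ((p * x / q : ℕ) : ℤ)
def Dsum (p q : ℕ) : ℤ := ∑ x ∈ Ico 1 q, (x : ℤ) * ((p * x / q : ℕ) : ℤ)
def Tsum (p q : ℕ) : ℤ := ∑ x ∈ Ico 1 q, ((p * x / q : ℕ) : ℤ) ^ 2

lemma sum_Ico_id (q : ℕ) : 2 * ∑ x ∈ Ico 1 q, (x : ℤ) = q * (q - 1) := by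
  induction q with
  | zero => simp
  | succ n ih =>
    rcases Nat.eq_zero_or_pos n with h | h
    · subst h; simp
    · rw [Finset.sum_Ico_succ_top h]
      push_cast
      push_cast at ih
      linarith

lemma sum_Ico_sq (q : ℕ) : 6 * ∑ x ∈ Ico 1 q, (x : ℤ) ^ 2 = (q - 1) * q * (2 * q - 1) := by
  induction q with
  | zero => simp
  | succ n ih =>
    rcases Nat.eq_zero_or_pos n with h | h
    · subst h; simp
    · rw [Finset.sum_Ico_succ_top h]
      push_cast
      push_cast at ih
      linear_combination ih

lemma sum_mod_perm (p q : ℕ) (hq : 0 < q) (hcop : Nat.Coprime p q) (f : ℕ → ℤ) :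
    ∑ x ∈ Ico 1 q, f (p * x % q) = ∑ x ∈ Ico 1 q, f x := by
  have hinj : ∀ x ∈ Ico 1 q, ∀ y ∈ Ico 1 q, p * x % q = p * y % q → x = y := by
    intro x hx y hy hxy
    rw [mem_Ico] at hx hy
    have h1 : p * x ≡ p * y [MOD q] := hxy
    have h2 : x ≡ y [MOD q] := Nat.ModEq.cancel_left_of_coprime (Nat.coprime_comm.mp hcop) h1
    have := h2.eq_of_lt_of_lt hx.2 hy.2
    exact this
  have hmap : ∀ x ∈ Ico 1 q, p * x % q ∈ Ico 1 q := by
    intro x hx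
    rw [mem_Ico] at hx ⊢
    refine ⟨?_, Nat.mod_lt _ hq⟩
    rcases Nat.eq_zero_or_pos (p * x % q) with h | h
    · exfalso
      have hdvd : q ∣ p * x := Nat.dvd_of_mod_eq_zero h
      have : q ∣ x := (Nat.Coprime.symm hcop).dvd_of_dvd_mul_left hdvd
      have := Nat.le_of_dvd (by omega) this
      omega
    · exact h
  have himage : (Ico 1 q).image (fun x => p * x % q) = Ico 1 q := by
    apply Finset.eq_of_subset_of_card_le
    · intro y hy
      rw [Finset.mem_image] at hy
      obtain ⟨x, hx, rfl⟩ := hy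
      exact hmap x hx
    · rw [Finset.card_image_of_injOn (fun x hx y hy h => hinj x hx y hy h)]
  conv_rhs => rw [← himage]
  rw [Finset.sum_image (fun x hx y hy h => hinj x hx y hy h)]

lemma divmod_cast (p q x : ℕ) :
    (q : ℤ) * ((p * x / q : ℕ) : ℤ) + ((p * x % q : ℕ) : ℤ) = (p : ℤ) * x := by
  have h := Nat.div_add_mod (p * x) q
  exact_mod_cast congrArg (Nat.cast : ℕ → ℤ) h

lemma Asum_eq (p q : ℕ) (hq : 0 < q) (hcop : Nat.Coprime p q) :
    2 * Asum p q = ((p : ℤ) - 1) * ((q : ℤ) - 1) := by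
  have e1 : (q : ℤ) * Asum p q
      = (p : ℤ) * (∑ x ∈ Ico 1 q, (x : ℤ)) - ∑ x ∈ Ico 1 q, ((p * x % q : ℕ) : ℤ) := by
    unfold Asum
    rw [Finset.mul_sum, Finset.mul_sum, ← Finset.sum_sub_distrib]
    refine Finset.sum_congr rfl fun x _ => ?_
    have := divmod_cast p q x
    linarith
  have e2 : ∑ x ∈ Ico 1 q, ((p * x % q : ℕ) : ℤ) = ∑ x ∈ Ico 1 q, (x : ℤ) :=
    sum_mod_perm p q hq hcop (fun n => (n : ℤ))
  have e3 := sum_Ico_id q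
  have h2 : (q : ℤ) * (2 * Asum p q) = (q : ℤ) * (((p : ℤ) - 1) * ((q : ℤ) - 1)) := by
    rw [e2] at e1
    linear_combination 2 * e1 + ((p : ℤ) - 1) * e3
  exact mul_left_cancel₀ (by exact_mod_cast hq.ne') h2

lemma Dsum_P (p q : ℕ) :
    (q : ℤ) * Dsum p q
      = (p : ℤ) * (∑ x ∈ Ico 1 q, (x : ℤ) ^ 2) - ∑ x ∈ Ico 1 q, (x : ℤ) * ((p * x % q : ℕ) : ℤ) := by
  unfold Dsum
  rw [Finset.mul_sum, Finset.mul_sum, ← Finset.sum_sub_distrib]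
  refine Finset.sum_congr rfl fun x _ => ?_
  have := divmod_cast p q x
  linear_combination (x : ℤ) * this

lemma Tsum_eq (p q : ℕ) (hq : 0 < q) (hcop : Nat.Coprime p q) :
    6 * (q : ℤ) ^ 2 * Tsum p q
      = (1 - (p : ℤ) ^ 2) * (((q : ℤ) - 1) * q * (2 * q - 1)) + 12 * p * q * Dsum p q := by
  have hT : (q : ℤ) ^ 2 * Tsum p q
      = (p : ℤ) ^ 2 * (∑ x ∈ Ico 1 q, (x : ℤ) ^ 2)
        - 2 * p * (∑ x ∈ Ico 1 q, (x : ℤ) * ((p * x % q : ℕ) : ℤ))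
        + ∑ x ∈ Ico 1 q, ((p * x % q : ℕ) : ℤ) ^ 2 := by
    unfold Tsum
    rw [Finset.mul_sum, Finset.mul_sum, Finset.mul_sum, ← Finset.sum_sub_distrib,
      ← Finset.sum_add_distrib]
    refine Finset.sum_congr rfl fun x _ => ?_
    have := divmod_cast p q x
    linear_combination ((q : ℤ) * ((p * x / q : ℕ) : ℤ) + (p : ℤ) * x - ((p * x % q : ℕ) : ℤ)) * this
  have e2 : ∑ x ∈ Ico 1 q, ((p * x % q : ℕ) : ℤ) ^ 2 = ∑ x ∈ Ico 1 q, (x : ℤ) ^ 2 :=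
    sum_mod_perm p q hq hcop (fun n => (n : ℤ) ^ 2)
  have hD := Dsum_P p q
  have e3 := sum_Ico_sq q
  rw [e2] at hT
  linear_combination 6 * hT - 12 * (p : ℤ) * hD + (1 - (p : ℤ) ^ 2) * e3
lemma floor_card (p q x : ℕ) (hp : 0 < p) (hq : 0 < q) (hx : x ∈ Ico 1 q) :
    p * x / q = ((Ico 1 p).filter fun y => q * y ≤ p * x).card := by
  rw [mem_Ico] at hx
  have hlt : p * x / q < p := by
    rw [Nat.div_lt_iff_lt_mul hq]
    exact (Nat.mul_lt_mul_left hp).mpr hx.2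
  have hflt : ((Ico 1 p).filter fun y => q * y ≤ p * x) = Ico 1 (p * x / q + 1) := by
    ext y
    simp only [mem_filter, mem_Ico]
    have h3 : y ≤ p * x / q ↔ y * q ≤ p * x := Nat.le_div_iff_mul_le hq
    have h4 : q * y = y * q := Nat.mul_comm q y
    omega
  rw [hflt, Nat.card_Ico]
  exact (Nat.add_sub_cancel _ _).symm

lemma upper_card (p q m : ℕ) (hp : 0 < p) (hq : 0 < q) (hcop : Nat.Coprime p q)
    (hm : m ∈ Ico 1 p) :
    ((((Ico 1 q).filter fun x => q * m ≤ p * x).card : ℤ))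
      = (q : ℤ) - 1 - ((q * m / p : ℕ) : ℤ) := by
  rw [mem_Ico] at hm
  have hndvd : ¬ p ∣ q * m := by
    intro hdvd
    have : p ∣ m := hcop.dvd_of_dvd_mul_left hdvd
    have := Nat.le_of_dvd (by omega) this
    omega
  have hiff : ∀ x : ℕ, (q * m ≤ p * x ↔ q * m / p < x) := by
    intro x
    have h1 : q * m / p < x ↔ q * m < x * p := Nat.div_lt_iff_lt_mul hp
    have h5 : p * x = x * p := Nat.mul_comm p x
    have h6 : q * m ≠ p * x := fun h => hndvd (h ▸ Dvd.intro x rfl)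
    omega
  have hflt : ((Ico 1 q).filter fun x => q * m ≤ p * x) = Ico (q * m / p + 1) q := by
    ext x
    have hx := hiff x
    simp only [mem_filter, mem_Ico, hx]
    generalize q * m / p = D
    omega
  have hbound : q * m / p < q := by
    rw [Nat.div_lt_iff_lt_mul hp]
    exact (Nat.mul_lt_mul_left hq).mpr hm.2
  rw [hflt, Nat.card_Ico]
  generalize hg : q * m / p = D at hbound ⊢
  omega

lemma max_sum (p : ℕ) (g : ℕ → ℤ) :
    ∑ y ∈ Ico 1 p, ∑ z ∈ Ico 1 p, g (max y z)
      = ∑ m ∈ Ico 1 p, (2 * (m : ℤ) - 1) * g m := by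
  induction p with
  | zero => simp
  | succ n ih =>
    rcases Nat.eq_zero_or_pos n with h | h
    · subst h; simp
    · have hin : ∀ y, ∑ z ∈ Ico 1 (n + 1), g (max y z)
          = ∑ z ∈ Ico 1 n, g (max y z) + g (max y n) := fun y =>
        Finset.sum_Ico_succ_top h _
      rw [Finset.sum_Ico_succ_top h, Finset.sum_Ico_succ_top h
        (f := fun m => (2 * (m : ℤ) - 1) * g m)]
      simp only [hin]
      rw [Finset.sum_add_distrib, ih]
      have hcast : ((n - 1 : ℕ) : ℤ) = (n : ℤ) - 1 := by omega
      have h1 : ∑ y ∈ Ico 1 n, g (max y n) = ((n : ℤ) - 1) * g n := by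
        have hc : ∀ y ∈ Ico 1 n, g (max y n) = g n := fun y hy => by
          rw [mem_Ico] at hy
          rw [max_eq_right (by omega : y ≤ n)]
        rw [Finset.sum_congr rfl hc, Finset.sum_const, Nat.card_Ico, nsmul_eq_mul, hcast]
      have h2 : ∑ z ∈ Ico 1 n, g (max n z) = ((n : ℤ) - 1) * g n := by
        have hc : ∀ z ∈ Ico 1 n, g (max n z) = g n := fun z hz => by
          rw [mem_Ico] at hz
          rw [max_eq_left (by omega : z ≤ n)]
        rw [Finset.sum_congr rfl hc, Finset.sum_const, Nat.card_Ico, nsmul_eq_mul, hcast]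
      rw [h1, h2, max_self]
      push_cast
      ring
lemma Tcount (p q : ℕ) (hp : 0 < p) (hq : 0 < q) (hcop : Nat.Coprime p q) :
    Tsum p q = ((p : ℤ) - 1) ^ 2 * ((q : ℤ) - 1) + Asum q p - 2 * Dsum q p := by
  have key : ∀ x ∈ Ico 1 q, ((p * x / q : ℕ) : ℤ) ^ 2
      = ∑ y ∈ Ico 1 p, ∑ z ∈ Ico 1 p, (if q * max y z ≤ p * x then (1 : ℤ) else 0) := by
    intro x hx
    rw [floor_card p q x hp hq hx, Finset.card_filter]
    push_cast
    rw [sq, Finset.sum_mul_sum]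
    refine Finset.sum_congr rfl fun y hy => Finset.sum_congr rfl fun z hz => ?_
    have hmm : q * max y z ≤ p * x ↔ (q * y ≤ p * x ∧ q * z ≤ p * x) := by
      constructor
      · intro h
        exact ⟨le_trans (Nat.mul_le_mul_left q (le_max_left y z)) h,
          le_trans (Nat.mul_le_mul_left q (le_max_right y z)) h⟩
      · rintro ⟨h1, h2⟩
        rcases max_cases y z with ⟨hm, _⟩ | ⟨hm, _⟩ <;> rw [hm] <;> assumption
    by_cases h1 : q * y ≤ p * x <;> by_cases h2 : q * z ≤ p * x <;>
      simp [h1, h2, hmm]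
  have step1 : Tsum p q
      = ∑ y ∈ Ico 1 p, ∑ z ∈ Ico 1 p, ∑ x ∈ Ico 1 q,
          (if q * max y z ≤ p * x then (1 : ℤ) else 0) := by
    unfold Tsum
    rw [Finset.sum_congr rfl key, Finset.sum_comm]
    exact Finset.sum_congr rfl fun y _ => Finset.sum_comm
  have step2 : ∀ y ∈ Ico 1 p, ∀ z ∈ Ico 1 p,
      ∑ x ∈ Ico 1 q, (if q * max y z ≤ p * x then (1 : ℤ) else 0)
        = (q : ℤ) - 1 - ((q * max y z / p : ℕ) : ℤ) := by
    intro y hy z hz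
    rw [mem_Ico] at hy hz
    have hmem : max y z ∈ Ico 1 p := by
      rw [mem_Ico]
      exact ⟨le_trans hy.1 (le_max_left y z), max_lt hy.2 hz.2⟩
    rw [← upper_card p q (max y z) hp hq hcop hmem, Finset.card_filter]
    push_cast
    rfl
  rw [step1, Finset.sum_congr rfl (fun y hy => Finset.sum_congr rfl (fun z hz => step2 y hy z hz)),
    max_sum p (fun m => (q : ℤ) - 1 - ((q * m / p : ℕ) : ℤ))]
  have e1 : ∑ m ∈ Ico 1 p, (2 * (m : ℤ) - 1) * ((q : ℤ) - 1 - ((q * m / p : ℕ) : ℤ))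
      = ((q : ℤ) - 1) * (2 * ∑ m ∈ Ico 1 p, (m : ℤ))
        - ((q : ℤ) - 1) * (((Ico 1 p).card : ℕ) : ℤ)
        - 2 * Dsum q p + Asum q p := by
    unfold Dsum Asum
    rw [Finset.cast_card]
    simp only [Finset.mul_sum, ← Finset.sum_sub_distrib, ← Finset.sum_add_distrib]
    exact Finset.sum_congr rfl fun m _ => by ring
  rw [e1, Nat.card_Ico]
  have e2 := sum_Ico_id p
  have e3 : ((p - 1 : ℕ) : ℤ) = (p : ℤ) - 1 := by omega
  rw [e3]
  linear_combination ((q : ℤ) - 1) * e2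

lemma rec_main (p q : ℕ) (hp : 0 < p) (hq : 0 < q) (hcop : Nat.Coprime p q) :
    12 * (p : ℤ) * Dsum p q + 12 * (q : ℤ) * Dsum q p
      = 6 * (q : ℤ) * ((p : ℤ) - 1) ^ 2 * ((q : ℤ) - 1)
        + 3 * (q : ℤ) * ((p : ℤ) - 1) * ((q : ℤ) - 1)
        + ((p : ℤ) ^ 2 - 1) * ((q : ℤ) - 1) * (2 * (q : ℤ) - 1) := by
  have h1 := Tsum_eq p q hq hcop
  have h2 := Tcount p q hp hq hcop
  have h3 := Asum_eq q p hp hcop.symm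
  have h4 : (q : ℤ) * (12 * (p : ℤ) * Dsum p q + 12 * (q : ℤ) * Dsum q p)
      = (q : ℤ) * (6 * (q : ℤ) * ((p : ℤ) - 1) ^ 2 * ((q : ℤ) - 1)
        + 3 * (q : ℤ) * ((p : ℤ) - 1) * ((q : ℤ) - 1)
        + ((p : ℤ) ^ 2 - 1) * ((q : ℤ) - 1) * (2 * (q : ℤ) - 1)) := by
    linear_combination (-1 : ℤ) * h1 + 6 * (q : ℤ) ^ 2 * h2 + 3 * (q : ℤ) ^ 2 * h3
  exact mul_left_cancel₀ (by exact_mod_cast hq.ne') h4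
lemma sum_lin (p q : ℕ) (α β : ℤ) :
    ∑ ν ∈ Ico 1 q, ((p * ν / q : ℕ) : ℤ) * (α + β * ν) = α * Asum p q + β * Dsum p q := by
  unfold Asum Dsum
  rw [Finset.mul_sum, Finset.mul_sum, ← Finset.sum_add_distrib]
  exact Finset.sum_congr rfl fun x _ => by ring

lemma double_sum (p q : ℕ) (hq : 0 < q) (f : ℕ → ℤ) :
    ∑ ν ∈ Ico 1 (2 * q), ((p * ν / q : ℕ) : ℤ) * f ν
      = (∑ μ ∈ Ico 1 q, ((p * μ / q : ℕ) : ℤ) * (f μ + f (μ + q)))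
        + p * (f q + ∑ μ ∈ Ico 1 q, f (μ + q)) := by
  have hdiv : ∀ μ : ℕ, p * (q + μ) / q = p * μ / q + p := by
    intro μ
    have h : p * (q + μ) = p * μ + q * p := by ring
    rw [h, Nat.add_mul_div_left _ _ hq]
  have hsplit := Finset.sum_Ico_consecutive
    (fun ν => ((p * ν / q : ℕ) : ℤ) * f ν) (show 1 ≤ q by omega) (show q ≤ 2 * q by omega)
  rw [← hsplit]
  have h2 : ∑ ν ∈ Ico q (2 * q), ((p * ν / q : ℕ) : ℤ) * f ν
      = (p : ℤ) * f q + ∑ μ ∈ Ico 1 q, (((p * μ / q : ℕ) : ℤ) * f (μ + q)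
          + (p : ℤ) * f (μ + q)) := by
    rw [Finset.sum_Ico_eq_sum_range, show 2 * q - q = q by omega]
    obtain ⟨n, rfl⟩ : ∃ n, q = n + 1 := ⟨q - 1, by omega⟩
    rw [Finset.sum_range_succ']
    have eA : ∑ μ ∈ Ico 1 (n + 1), (((p * μ / (n + 1) : ℕ) : ℤ) * f (μ + (n + 1))
          + (p : ℤ) * f (μ + (n + 1)))
        = ∑ i ∈ Finset.range n, (((p * (1 + i) / (n + 1) : ℕ) : ℤ) * f ((1 + i) + (n + 1))
          + (p : ℤ) * f ((1 + i) + (n + 1))) := by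
      rw [Finset.sum_Ico_eq_sum_range, show n + 1 - 1 = n by omega]
    rw [eA]
    have hzero : ((p * (n + 1 + 0) / (n + 1) : ℕ) : ℤ) * f (n + 1 + 0) = (p : ℤ) * f (n + 1) := by
      rw [Nat.add_zero, Nat.mul_div_cancel _ (by omega : 0 < n + 1)]
    rw [hzero]
    have hterm : ∀ i, ((p * (n + 1 + (i + 1)) / (n + 1) : ℕ) : ℤ) * f (n + 1 + (i + 1))
        = ((p * (1 + i) / (n + 1) : ℕ) : ℤ) * f ((1 + i) + (n + 1))
          + (p : ℤ) * f ((1 + i) + (n + 1)) := by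
      intro i
      rw [hdiv (i + 1), show 1 + i = i + 1 by omega, show (i + 1) + (n + 1) = n + 1 + (i + 1) by omega]
      push_cast
      ring
    rw [Finset.sum_congr rfl fun i _ => hterm i]
    ring
  rw [h2]
  simp only [mul_add, Finset.sum_add_distrib, Finset.mul_sum]
  ring
lemma Mpart_left (a c : ℕ) (hc : 0 < c) :
    Mpart a (2 * c)
      = (a : ℤ) * (2 * (c : ℤ)) ^ 2
        + 3 * ((2 * (c : ℤ)) * Asum a (4 * c) - Dsum a (4 * c))
        + 3 * ((2 * (c : ℤ)) * Asum a c - 4 * Dsum a c - (a : ℤ) * ((c : ℤ) * ((c : ℤ) - 1)))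
        - 6 * ((2 * (c : ℤ)) * Asum a (2 * c) - 2 * Dsum a (2 * c)) := by
  unfold Mpart
  simp only [show 2 * (2 * c) = 4 * c from by ring]
  have hS1 : ∑ ν ∈ Ico 1 (4 * c), ((a * ν / (4 * c) : ℕ) : ℤ) * (((2 * c : ℕ) : ℤ) - (ν : ℤ))
      = (((2 * c : ℕ)) : ℤ) * Asum a (4 * c) + (-1) * Dsum a (4 * c) := by
    rw [← sum_lin a (4 * c) (((2 * c : ℕ)) : ℤ) (-1)]
    exact Finset.sum_congr rfl fun ν _ => by ring
  have hdd : ∀ ν : ℕ, 2 * a * ν / (2 * c) = a * ν / c := by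
    intro ν
    rw [mul_assoc]
    exact Nat.mul_div_mul_left _ _ (by norm_num)
  have hS3 : ∑ ν ∈ Ico 1 (2 * c), (((2 * a * ν / (2 * c) : ℕ) : ℤ)
        - 2 * ((a * ν / (2 * c) : ℕ) : ℤ)) * (((2 * c : ℕ) : ℤ) - 2 * (ν : ℤ))
      = (∑ ν ∈ Ico 1 (2 * c), ((a * ν / c : ℕ) : ℤ) * (((2 * c : ℕ) : ℤ) - 2 * (ν : ℤ)))
        - 2 * ∑ ν ∈ Ico 1 (2 * c), ((a * ν / (2 * c) : ℕ) : ℤ)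
            * (((2 * c : ℕ) : ℤ) - 2 * (ν : ℤ)) := by
    rw [Finset.mul_sum, ← Finset.sum_sub_distrib]
    refine Finset.sum_congr rfl fun ν _ => ?_
    rw [hdd ν]
    ring
  have hS3a : ∑ ν ∈ Ico 1 (2 * c), ((a * ν / c : ℕ) : ℤ) * (((2 * c : ℕ) : ℤ) - 2 * (ν : ℤ))
      = 2 * (c : ℤ) * Asum a c - 4 * Dsum a c - (a : ℤ) * ((c : ℤ) * ((c : ℤ) - 1)) := by
    have hd := double_sum a c hc (fun n => ((2 * c : ℕ) : ℤ) - 2 * (n : ℤ))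
    rw [hd]
    have e1 : ∑ μ ∈ Ico 1 c, ((a * μ / c : ℕ) : ℤ)
          * (((((2 * c : ℕ)) : ℤ) - 2 * (μ : ℤ)) + ((((2 * c : ℕ)) : ℤ) - 2 * ((μ + c : ℕ) : ℤ)))
        = (2 * (c : ℤ)) * Asum a c + (-4) * Dsum a c := by
      rw [← sum_lin a c (2 * (c : ℤ)) (-4)]
      refine Finset.sum_congr rfl fun μ _ => ?_
      push_cast
      ring
    have e2 : ∑ μ ∈ Ico 1 c, ((((2 * c : ℕ)) : ℤ) - 2 * ((μ + c : ℕ) : ℤ))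
        = -2 * ∑ μ ∈ Ico 1 c, (μ : ℤ) := by
      rw [Finset.mul_sum]
      refine Finset.sum_congr rfl fun μ _ => by push_cast; ring
    rw [e1, e2]
    have e3 := sum_Ico_id c
    push_cast
    linear_combination (-(a : ℤ)) * e3
  have hS3b : ∑ ν ∈ Ico 1 (2 * c), ((a * ν / (2 * c) : ℕ) : ℤ)
        * (((2 * c : ℕ) : ℤ) - 2 * (ν : ℤ))
      = (((2 * c : ℕ)) : ℤ) * Asum a (2 * c) + (-2) * Dsum a (2 * c) := by
    rw [← sum_lin a (2 * c) (((2 * c : ℕ)) : ℤ) (-2)]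
    exact Finset.sum_congr rfl fun ν _ => by ring
  rw [hS1, hS3, hS3a, hS3b]
  push_cast
  ring

lemma Mpart_right (a c : ℕ) (ha : 0 < a) :
    2 * Mpart (2 * c) a
      = 2 * ((2 * (c : ℤ)) * (a : ℤ) ^ 2)
        + 6 * ((a : ℤ) * Asum c a - 2 * Dsum c a) - 3 * (c : ℤ) * ((a : ℤ) * ((a : ℤ) - 1))
        + 6 * (((a : ℤ) * Asum (4 * c) a - 2 * Dsum (4 * c) a)
            - 2 * ((a : ℤ) * Asum (2 * c) a - 2 * Dsum (2 * c) a)) := by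
  unfold Mpart
  have hdd : ∀ ν : ℕ, 2 * c * ν / (2 * a) = c * ν / a := by
    intro ν
    rw [mul_assoc]
    exact Nat.mul_div_mul_left _ _ (by norm_num)
  have hdd2 : ∀ ν : ℕ, 2 * (2 * c) * ν = 4 * c * ν := fun ν => by ring
  simp only [hdd2]
  have hfirst : ∑ ν ∈ Ico 1 (2 * a), ((2 * c * ν / (2 * a) : ℕ) : ℤ) * ((a : ℤ) - (ν : ℤ))
      = ∑ ν ∈ Ico 1 (2 * a), ((c * ν / a : ℕ) : ℤ) * ((a : ℤ) - (ν : ℤ)) :=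
    Finset.sum_congr rfl fun ν _ => by rw [hdd ν]
  rw [hfirst]
  have hdbl : 2 * ∑ ν ∈ Ico 1 (2 * a), ((c * ν / a : ℕ) : ℤ) * ((a : ℤ) - (ν : ℤ))
      = 2 * ((a : ℤ) * Asum c a + (-2) * Dsum c a) - (c : ℤ) * ((a : ℤ) * ((a : ℤ) - 1)) := by
    have hd := double_sum c a ha (fun n => (a : ℤ) - (n : ℤ))
    rw [hd]
    have e1 : ∑ μ ∈ Ico 1 a, ((c * μ / a : ℕ) : ℤ)
          * (((a : ℤ) - (μ : ℤ)) + ((a : ℤ) - ((μ + a : ℕ) : ℤ)))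
        = (a : ℤ) * Asum c a + (-2) * Dsum c a := by
      rw [← sum_lin c a ((a : ℤ)) (-2)]
      refine Finset.sum_congr rfl fun μ _ => ?_
      push_cast
      ring
    have e2 : ∑ μ ∈ Ico 1 a, ((a : ℤ) - ((μ + a : ℕ) : ℤ)) = -1 * ∑ μ ∈ Ico 1 a, (μ : ℤ) := by
      rw [Finset.mul_sum]
      refine Finset.sum_congr rfl fun μ _ => by push_cast; ring
    rw [e1, e2]
    have e3 := sum_Ico_id a
    push_cast
    linear_combination (-(c : ℤ)) * e3
  have hsecond : ∑ ν ∈ Ico 1 a, (((4 * c * ν / a : ℕ) : ℤ) - 2 * ((2 * c * ν / a : ℕ) : ℤ))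
        * ((a : ℤ) - 2 * (ν : ℤ))
      = ((a : ℤ) * Asum (4 * c) a + (-2) * Dsum (4 * c) a)
        - 2 * ((a : ℤ) * Asum (2 * c) a + (-2) * Dsum (2 * c) a) := by
    rw [← sum_lin (4 * c) a ((a : ℤ)) (-2), ← sum_lin (2 * c) a ((a : ℤ)) (-2),
      Finset.mul_sum, ← Finset.sum_sub_distrib]
    exact Finset.sum_congr rfl fun ν _ => by ring
  rw [hsecond, show ((2 * c : ℕ) : ℤ) = 2 * (c : ℤ) from by push_cast; ring]
  linear_combination 3 * hdbl

lemma main_case (a c : ℕ) (ha : 0 < a) (hc : 0 < c) (hodd : Odd a)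
    (hcop : Nat.Coprime a c) :
    4 * ((a : ℤ) * Mpart a (2 * c) + (2 * (c : ℤ)) * Mpart (2 * c) a)
      = 1 - (a : ℤ) ^ 2 - (2 * (c : ℤ)) ^ 2
        + 6 * (a : ℤ) * (2 * (c : ℤ)) * ((a : ℤ) + 2 * (c : ℤ)) := by
  have h2 : Nat.Coprime a 2 := Nat.coprime_two_right.mpr hodd
  have hc2 : Nat.Coprime a (2 * c) := Nat.Coprime.mul_right h2 hcop
  have hc4 : Nat.Coprime a (4 * c) := by
    have := Nat.Coprime.mul_right h2 hc2
    rwa [show 2 * (2 * c) = 4 * c from by ring] at this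
  have r1 := rec_main a (4 * c) ha (by omega) hc4
  have r2 := rec_main a (2 * c) ha (by omega) hc2
  have r3 := rec_main a c ha hc hcop
  have hA1 := Asum_eq a (4 * c) (by omega) hc4
  have hA2 := Asum_eq (4 * c) a ha hc4.symm
  have hA3 := Asum_eq a (2 * c) (by omega) hc2
  have hA4 := Asum_eq (2 * c) a ha hc2.symm
  have hA5 := Asum_eq a c hc hcop
  have hA6 := Asum_eq c a ha hcop.symm
  have hL := Mpart_left a c hc
  have hR := Mpart_right a c ha
  push_cast at r1 r2 r3 hA1 hA2 hA3 hA4 hA5 hA6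
  linear_combination 4 * (a : ℤ) * hL + 4 * (c : ℤ) * hR
    + (-1) * r1 + 4 * r2 - 4 * r3
    + 12 * (a : ℤ) * (c : ℤ) * (hA1 + hA2 + hA5 + hA6)
    - 24 * (a : ℤ) * (c : ℤ) * (hA3 + hA4)

end MRec

theorem Mpart_reciprocity (a b : ℕ) (ha : 0 < a) (hb : 0 < b) (hcop : Nat.gcd a b = 1)
    (hodd : Odd (a + b)) :
    ((a : ℚ) * (Mpart a b : ℚ) + (b : ℚ) * (Mpart b a : ℚ) =
      (1 - (a : ℚ) ^ 2 - (b : ℚ) ^ 2 + 6 * a * b * (a + b)) / 4) := by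
  have hkey : 4 * ((a : ℤ) * Mpart a b + (b : ℤ) * Mpart b a)
      = 1 - (a : ℤ) ^ 2 - (b : ℤ) ^ 2 + 6 * (a : ℤ) * (b : ℤ) * ((a : ℤ) + (b : ℤ)) := by
    rcases Nat.even_or_odd a with hea | hoa
    · obtain ⟨r, hr⟩ := hea
      have hob : Odd b := by
        obtain ⟨k, hk⟩ := hodd
        exact ⟨k - r, by omega⟩
      have hbc : Nat.Coprime b r := by
        have h1 : Nat.Coprime b a := (Nat.coprime_comm.mp hcop)
        exact h1.coprime_dvd_right ⟨2, by omega⟩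
      have hrpos : 0 < r := by omega
      have hm := MRec.main_case b r hb hrpos hob hbc
      rw [show a = 2 * r from by omega]
      push_cast
      push_cast at hm
      linear_combination hm
    · have heb : Even b := by
        obtain ⟨k, hk⟩ := hodd
        obtain ⟨m, hm⟩ := hoa
        exact ⟨k - m, by omega⟩
      obtain ⟨r, hr⟩ := heb
      have hac : Nat.Coprime a r := by
        exact (show Nat.Coprime a b from hcop).coprime_dvd_right ⟨2, by omega⟩
      have hrpos : 0 < r := by omega
      have hm := MRec.main_case a r ha hrpos hoa hac
      rw [show b = 2 * r from by omega]
      push_cast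
      push_cast at hm
      linear_combination hm
  have hq := congrArg (fun z : ℤ => (z : ℚ)) hkey
  push_cast at hq
  linear_combination hq / 4
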